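/- arXiv:0810.1483 — 2 statements merged into one kernel-verified Lean document; each statement's English description precedes it below -/
import Mathlib

section
/- The sequence P(n) = (T^L(n)+α)/(T(n)+2α) is a bounded martingale with respect to the natural filtration, and hence converges almost surely. -/
open MeasureTheory ProbabilityTheory Filter Set Topology

/-!
Given `ℱ n`, the next proportion `(x + I·D) / (s + I)`, with `x = T^L(n) + α` and
`s = T(n) + 2α`, is affine in the draw `D` with `ℱ n`-measurable coefficients. Pulling them out of
the conditional expectation replaces `D` by `P n = x / s`, and `x / s` is a fixed point of
`p ↦ (x + I·p) / (s + I)`. The proportion stays in `[0, 1]` because `0 ≤ T^L ≤ T`, so the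
martingale is bounded in `L¹` and Doob's convergence theorem applies.
-/

section

variable {Ω : Type*} {m0 : MeasurableSpace Ω} {μ : Measure Ω}

theorem mem_Icc_of_increments {l t i d : ℕ → ℝ} (hl0 : l 0 = 0) (ht0 : t 0 = 0)
    (hi : ∀ n, 0 ≤ i n) (hd : ∀ n, d n ∈ Icc 0 1)
    (hl : ∀ n, l (n + 1) = l n + i n * d n) (ht : ∀ n, t (n + 1) = t n + i n) :
    ∀ n, l n ∈ Icc 0 (t n)
  | 0 => by simp [hl0, ht0]
  | n + 1 => by
    obtain ⟨hl_nonneg, hl_le⟩ := mem_Icc_of_increments hl0 ht0 hi hd hl ht n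
    have hid : i n * d n ∈ Icc 0 (i n) :=
      ⟨mul_nonneg (hi n) (hd n).1, mul_le_of_le_one_right (hi n) (hd n).2⟩
    rw [hl, ht]
    exact ⟨by linarith [hid.1], by linarith [hid.2]⟩

theorem adapted_nat_of_eq_add {β : Type*} [MeasurableSpace β] [Add β] [MeasurableAdd₂ β]
    {ℱ : Filtration ℕ m0} {u v : ℕ → Ω → β} (h0 : Measurable[ℱ 0] (u 0))
    (hv : ∀ n, Measurable[ℱ (n + 1)] (v n)) (hu : ∀ n, u (n + 1) = u n + v n) :
    Adapted ℱ u
  | 0 => h0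
  | n + 1 =>
    hu n ▸ ((adapted_nat_of_eq_add h0 hv hu n).mono (ℱ.mono n.le_succ) le_rfl).add (hv n)

theorem MeasureTheory.Submartingale.ae_tendsto_limitProcess_of_norm_le [IsFiniteMeasure μ]
    {ℱ : Filtration ℕ m0} {f : ℕ → Ω → ℝ} (hf : Submartingale f ℱ μ) {C : ℝ}
    (hbdd : ∀ n, ∀ᵐ ω ∂μ, ‖f n ω‖ ≤ C) :
    ∀ᵐ ω ∂μ, Tendsto (fun n => f n ω) atTop (𝓝 (ℱ.limitProcess f μ ω)) := by
  refine hf.ae_tendsto_limitProcess (R := (μ univ).toNNReal * C.toNNReal) fun n => ?_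
  refine (eLpNorm_le_of_ae_bound (hbdd n)).trans_eq ?_
  simp [ENNReal.coe_mul, ENNReal.ofReal]

theorem condExp_div_add_eq_div {m : MeasurableSpace Ω} (hm : m ≤ m0) [IsFiniteMeasure μ]
    {x s i d : Ω → ℝ} (hx : Measurable[m] x) (hs : Measurable[m] s) (hi : Measurable[m] i)
    (hs_pos : ∀ ω, 0 < s ω) (hi_nonneg : ∀ ω, 0 ≤ i ω) (hxs : ∀ ω, |x ω| ≤ s ω)
    (hd : Integrable d μ) (hcond : μ[d|m] =ᵐ[μ] x / s) :
    μ[fun ω => (x ω + i ω * d ω) / (s ω + i ω)|m] =ᵐ[μ] x / s := by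
  set a := x / (s + i)
  set b := i / (s + i)
  have hsi : ∀ ω, 0 < s ω + i ω := fun ω => add_pos_of_pos_of_nonneg (hs_pos ω) (hi_nonneg ω)
  have hdecomp : (fun ω => (x ω + i ω * d ω) / (s ω + i ω)) = a + b * d := by
    funext ω
    simp only [a, b, Pi.add_apply, Pi.mul_apply, Pi.div_apply]
    ring
  have ha : StronglyMeasurable[m] a := (hx.div (hs.add hi)).stronglyMeasurable
  have hb : StronglyMeasurable[m] b := (hi.div (hs.add hi)).stronglyMeasurable
  have ha_int : Integrable a μ := by
    refine .of_bound (ha.mono hm).aestronglyMeasurable 1 (ae_of_all _ fun ω => ?_)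
    simp only [a, Pi.div_apply, Pi.add_apply, norm_div, Real.norm_eq_abs, abs_of_pos (hsi ω)]
    exact div_le_one_of_le₀ ((hxs ω).trans (le_add_of_nonneg_right (hi_nonneg ω))) (hsi ω).le
  have hbd_int : Integrable (b * d) μ := by
    refine hd.bdd_mul (c := 1) (hb.mono hm).aestronglyMeasurable (ae_of_all _ fun ω => ?_)
    simp only [b, Pi.div_apply, Pi.add_apply, norm_div, Real.norm_eq_abs, abs_of_pos (hsi ω),
      abs_of_nonneg (hi_nonneg ω)]
    exact div_le_one_of_le₀ (le_add_of_nonneg_left (hs_pos ω).le) (hsi ω).le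
  rw [hdecomp]
  calc μ[a + b * d|m]
      =ᵐ[μ] μ[a|m] + μ[b * d|m] := condExp_add ha_int hbd_int m
    _ =ᵐ[μ] a + b * (x / s) := by
      rw [condExp_of_stronglyMeasurable hm ha ha_int]
      exact (condExp_mul_of_stronglyMeasurable_left hb hbd_int hd).trans
        (EventuallyEq.rfl.mul hcond) |>.add_left
    _ = x / s := by
      funext ω
      have := (hs_pos ω).ne'
      have := (hsi ω).ne'
      simp only [a, b, Pi.add_apply, Pi.mul_apply, Pi.div_apply]
      field_simp

end

/-- **The urn proportion process is a bounded martingale.**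
In a generalized Pólya urn with time-dependent input sizes `I(n) > 0`,
total input `T(n) = I(0) + ⋯ + I(n-1)`, left total
`T^L(n) = T^L(n-1) + I(n-1)·D(n)` where `D(n) ∈ {0,1}` has conditional mean
`P(n-1) = (T^L(n-1)+α)/(T(n-1)+2α)` given the past, the sequence
`P(n) = (T^L(n)+α)/(T(n)+2α)` is a martingale taking values in `[0,1]`
(in particular bounded), and hence converges almost surely. -/
theorem stmt1
    {Ω : Type*} {m0 : MeasurableSpace Ω} {μ : Measure Ω} [IsProbabilityMeasure μ]
    (α : ℝ) (hα : 0 < α)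
    (ℱ : Filtration ℕ m0)
    (I : ℕ → Ω → ℝ) (hIpos : ∀ n ω, 0 < I n ω)
    (hIadapted : Adapted ℱ I)
    (D : ℕ → Ω → ℝ) (hD01 : ∀ n ω, D n ω = 0 ∨ D n ω = 1)
    (hDadapted : ∀ n, Measurable[ℱ (n + 1)] (D (n + 1)))
    (T : ℕ → Ω → ℝ) (hT : ∀ n ω, T n ω = ∑ i ∈ Finset.range n, I i ω)
    (TL : ℕ → Ω → ℝ)
    (hTL0 : ∀ ω, TL 0 ω = 0)
    (hTLrec : ∀ n ω, TL (n + 1) ω = TL n ω + I n ω * D (n + 1) ω)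
    (P : ℕ → Ω → ℝ)
    (hP : ∀ n ω, P n ω = (TL n ω + α) / (T n ω + 2 * α))
    (hcond : ∀ n, (fun ω => (μ[D (n + 1)|ℱ n]) ω) =ᵐ[μ] P n) :
    Martingale P ℱ μ ∧
    (∀ n ω, P n ω ∈ Set.Icc (0 : ℝ) 1) ∧
    ∃ Plim : Ω → ℝ, ∀ᵐ ω ∂μ, Tendsto (fun n => P n ω) atTop (nhds (Plim ω)) := by
  have hT0 : T 0 = 0 := funext fun ω => by simp [hT]
  have hTsucc : ∀ n, T (n + 1) = T n + I n := fun n => funext fun ω => by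
    simp [hT, Finset.sum_range_succ]
  have hD : ∀ n ω, D n ω ∈ Icc 0 1 := fun n ω => by rcases hD01 n ω with h | h <;> simp [h]
  have hTL : ∀ n ω, TL n ω ∈ Icc 0 (T n ω) := fun n ω =>
    mem_Icc_of_increments (l := (TL · ω)) (t := (T · ω)) (hTL0 ω) (congrFun hT0 ω)
      (fun k => (hIpos k ω).le) (fun k => hD (k + 1) ω) (hTLrec · ω)
      (fun k => congrFun (hTsucc k) ω) n
  have hden : ∀ n ω, 0 < T n ω + 2 * α := fun n ω => by linarith [(hTL n ω).1, (hTL n ω).2]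
  have hTadapted : Adapted ℱ T := adapted_nat_of_eq_add (hT0 ▸ measurable_const)
    (fun n => hIadapted.measurable_le n.le_succ) hTsucc
  have hTLadapted : Adapted ℱ TL := adapted_nat_of_eq_add (by simp [funext hTL0])
    (fun n => (hIadapted.measurable_le n.le_succ).mul (hDadapted n)) (fun n => funext (hTLrec n))
  have hPeq : ∀ n, P n = (fun ω => TL n ω + α) / fun ω => T n ω + 2 * α :=
    fun n => funext (hP n)
  have hPmem : ∀ n ω, P n ω ∈ Icc 0 1 := fun n ω => (hP n ω).symm ▸
    ⟨div_nonneg (by linarith [(hTL n ω).1]) (hden n ω).le,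
      div_le_one_of_le₀ (by linarith [(hTL n ω).2]) (hden n ω).le⟩
  have hPadapted : Adapted ℱ P := fun n =>
    hPeq n ▸ ((hTLadapted n).add_const α).div ((hTadapted n).add_const _)
  have hstep : ∀ n, P n =ᵐ[μ] μ[P (n + 1)|ℱ n] := fun n => by
    have hPsucc : P (n + 1) = fun ω =>
        (TL n ω + α + I n ω * D (n + 1) ω) / (T n ω + 2 * α + I n ω) := funext fun ω => by
      rw [hP, hTLrec, hTsucc, Pi.add_apply]
      ring
    rw [hPsucc, hPeq]
    exact (condExp_div_add_eq_div (ℱ.le n) ((hTLadapted n).add_const α)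
      ((hTadapted n).add_const _) (hIadapted n) (hden n) (fun ω => (hIpos n ω).le)
      (fun ω => abs_le.2 ⟨by linarith [(hTL n ω).1, hden n ω], by linarith [(hTL n ω).2]⟩)
      (.of_mem_Icc 0 1 ((hDadapted n).mono (ℱ.le _) le_rfl).aemeasurable (ae_of_all _ (hD _)))
      (hPeq n ▸ hcond n)).symm
  have hmart : Martingale P ℱ μ := martingale_nat (fun n => (hPadapted n).stronglyMeasurable)
    (fun n => .of_mem_Icc 0 1 hPadapted.measurable.aemeasurable (ae_of_all _ (hPmem n))) hstep
  have hbdd : ∀ n, ∀ᵐ ω ∂μ, ‖P n ω‖ ≤ 1 := fun n => ae_of_all _ fun ω =>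
    (Real.norm_of_nonneg (hPmem n ω).1).trans_le (hPmem n ω).2
  exact ⟨hmart, hPmem, _, hmart.submartingale.ae_tendsto_limitProcess_of_norm_le hbdd⟩
end

section
/- Let d_n ∈ {0,1} be adapted to a filtration F_n with E[d_{n+1} | F_n] = p_n, where p_n is an F_n-measurable [0,1]-valued martingale converging a.s. to p, and suppose (1/n)Σ_{i=1}^n d_i → p a.s. Then the switching rate S(n) = (1/(n-1))·Σ_{i=2}^n [d_i(1-d_{i-1}) + d_{i-1}(1-d_i)] converges almost surely to 2p(1-p). -/
/-!
The switching indicator telescopes: `d (j+1) (1 - d j) + d j (1 - d (j+1))` equals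
`(d (j+1) - d j) + 2 (d j - d j d (j+1))`, so it suffices to show that the averages of
`d j d (j+1)` tend to `p²`. Split `d j d (j+1) = d j p j + d j (d (j+1) - p j)`. The first part
averages to `p²` by a weighted Cesàro argument, because `p j → p` and the averages of `d j`
tend to `p`. The second part is a bounded martingale difference sequence, hence its averages tend
to `0` almost surely: its partial sums satisfy `E[S n ^ 2] ≤ n`, so `∑ₖ E[(S (k²) / k²)²] < ∞`
forces `S (k²) / k² → 0` almost surely, and bounded increments interpolate between squares.
-/

open MeasureTheory ProbabilityTheory Filter Topology Finset
open scoped ENNReal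

lemma tendsto_div_of_eventually_abs_sub_le {f g : ℕ → ℝ} {L C : ℝ}
    (hfg : ∀ᶠ n in atTop, |g n - f n| ≤ C) (hf : Tendsto (fun n => f n / n) atTop (𝓝 L)) :
    Tendsto (fun n => g n / n) atTop (𝓝 L) := by
  have hdiff : Tendsto (fun n : ℕ => (g n - f n) / n) atTop (𝓝 0) := by
    refine squeeze_zero_norm' ?_ (tendsto_const_div_atTop_nhds_zero_nat C)
    filter_upwards [hfg] with n hn
    rw [norm_div, Real.norm_eq_abs, Real.norm_natCast]
    exact div_le_div_of_nonneg_right hn n.cast_nonneg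
  have := hf.add hdiff
  rw [add_zero] at this
  exact this.congr fun n => by ring

lemma tendsto_div_sub_one_of_tendsto_div {g : ℕ → ℝ} {L : ℝ}
    (h : Tendsto (fun n => g n / n) atTop (𝓝 L)) :
    Tendsto (fun n => g n / ((n : ℝ) - 1)) atTop (𝓝 L) := by
  have := h.mul (tendsto_natCast_div_add_atTop (-1 : ℝ))
  rw [mul_one] at this
  refine this.congr' ?_
  filter_upwards [eventually_gt_atTop 0] with n hn
  have hn : (n : ℝ) ≠ 0 := by positivity
  rw [← sub_eq_add_neg, div_mul_div_comm, mul_comm, mul_div_mul_left _ _ hn]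

lemma tendsto_sum_range_mul_div {a b : ℕ → ℝ} {α β C : ℝ} (ha : ∀ j, |a j| ≤ C)
    (hA : Tendsto (fun n => (∑ j ∈ range n, a j) / n) atTop (𝓝 α))
    (hb : Tendsto b atTop (𝓝 β)) :
    Tendsto (fun n => (∑ j ∈ range n, a j * b j) / n) atTop (𝓝 (α * β)) := by
  have hdev : Tendsto (fun n => (∑ j ∈ range n, a j * (b j - β)) / n) atTop (𝓝 0) := by
    have hb0 : Tendsto (fun j => C * |b j - β|) atTop (𝓝 0) := by
      simpa using ((hb.sub_const β).abs.const_mul C)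
    refine squeeze_zero_norm (fun n => ?_) hb0.cesaro
    rw [Real.norm_eq_abs, div_eq_inv_mul, abs_mul, abs_inv, Nat.abs_cast]
    gcongr
    refine (abs_sum_le_sum_abs _ _).trans (sum_le_sum fun j _ => ?_)
    rw [abs_mul]
    exact mul_le_mul_of_nonneg_right (ha j) (abs_nonneg _)
  have := (hA.mul_const β).add hdev
  rw [add_zero] at this
  refine this.congr fun n => ?_
  simp only [mul_sub, sum_sub_distrib, ← sum_mul]
  ring

lemma tendsto_sum_range_div_of_tendsto_sq {x : ℕ → ℝ} {C : ℝ} (hx : ∀ j, |x j| ≤ C)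
    (h : Tendsto (fun k : ℕ => (∑ j ∈ range (k ^ 2), x j) / (k : ℝ) ^ 2) atTop (𝓝 0)) :
    Tendsto (fun n => (∑ j ∈ range n, x j) / n) atTop (𝓝 0) := by
  have hsqrt : Tendsto Nat.sqrt atTop atTop :=
    tendsto_atTop_atTop.2 fun b => ⟨b * b, fun n hn => Nat.le_sqrt.2 hn⟩
  have hbound : Tendsto (fun k : ℕ => |(∑ j ∈ range (k ^ 2), x j) / (k : ℝ) ^ 2| + 2 * C / k)
      atTop (𝓝 0) := by
    simpa using h.abs.add (tendsto_const_div_atTop_nhds_zero_nat (2 * C))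
  refine squeeze_zero_norm' ?_ (hbound.comp hsqrt)
  filter_upwards [eventually_gt_atTop 0] with n hn
  set k := n.sqrt
  have hk : (0 : ℝ) < k := by exact_mod_cast Nat.sqrt_pos.2 hn
  have hkn : k ^ 2 ≤ n := Nat.sqrt_le' n
  have hnk : n - k ^ 2 ≤ 2 * k := by
    have h1 : n < (k + 1) ^ 2 := Nat.lt_succ_sqrt' n
    have h2 : (k + 1) ^ 2 = k ^ 2 + 2 * k + 1 := by ring
    omega
  have hC : 0 ≤ C := (abs_nonneg _).trans (hx 0)
  have htail : |∑ j ∈ range n, x j| ≤ |∑ j ∈ range (k ^ 2), x j| + 2 * k * C := by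
    have hIco : |∑ j ∈ Ico (k ^ 2) n, x j| ≤ 2 * k * C := by
      refine (abs_sum_le_sum_abs _ _).trans ((sum_le_card_nsmul _ _ C fun j _ => hx j).trans ?_)
      rw [Nat.card_Ico, nsmul_eq_mul]
      gcongr
      exact_mod_cast hnk
    rw [sum_Ico_eq_sub _ hkn] at hIco
    linarith [abs_sub_abs_le_abs_sub (∑ j ∈ range n, x j) (∑ j ∈ range (k ^ 2), x j)]
  have hkn' : (k : ℝ) ^ 2 ≤ n := by exact_mod_cast hkn
  calc ‖(∑ j ∈ range n, x j) / n‖ = |∑ j ∈ range n, x j| / n := by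
        rw [Real.norm_eq_abs, abs_div, Nat.abs_cast]
    _ ≤ (|∑ j ∈ range (k ^ 2), x j| + 2 * k * C) / (k : ℝ) ^ 2 :=
        div_le_div₀ (by positivity) htail (by positivity) hkn'
    _ = |(∑ j ∈ range (k ^ 2), x j) / (k : ℝ) ^ 2| + 2 * C / k := by
        rw [abs_div, abs_of_pos (by positivity : (0 : ℝ) < k ^ 2)]
        field_simp

section MartingaleDifference

variable {Ω : Type*} {m0 : MeasurableSpace Ω} {μ : Measure Ω}

lemma ae_tendsto_zero_of_summable_integral {g : ℕ → Ω → ℝ} (hg0 : ∀ k ω, 0 ≤ g k ω)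
    (hgi : ∀ k, Integrable (g k) μ) (hs : Summable fun k => ∫ ω, g k ω ∂μ) :
    ∀ᵐ ω ∂μ, Tendsto (fun k => g k ω) atTop (𝓝 0) := by
  have hf : ∀ k, AEMeasurable (fun ω => ENNReal.ofReal (g k ω)) μ :=
    fun k => (hgi k).aemeasurable.ennreal_ofReal
  have hfin : ∑' k, ∫⁻ ω, ENNReal.ofReal (g k ω) ∂μ ≠ ∞ := by
    simp_rw [← ofReal_integral_eq_lintegral_ofReal (hgi _) (ae_of_all _ (hg0 _)),
      ← ENNReal.ofReal_tsum_of_nonneg (fun k => integral_nonneg (hg0 k)) hs]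
    exact ENNReal.ofReal_ne_top
  rw [← lintegral_tsum hf] at hfin
  filter_upwards [ae_lt_top' (AEMeasurable.tsum hf) hfin] with ω hω
  have := (ENNReal.tendsto_toReal ENNReal.zero_ne_top).comp
    (ENNReal.tendsto_atTop_zero_of_tsum_ne_top hω.ne)
  simpa [Function.comp_def, ENNReal.toReal_ofReal (hg0 _ ω)] using this

variable {m : MeasurableSpace Ω}

lemma integral_mul_eq_zero_of_condExp_eq_zero [IsFiniteMeasure μ] (hm : m ≤ m0) {X Y : Ω → ℝ}
    (hX : StronglyMeasurable[m] X) (hXY : Integrable (X * Y) μ) (hY : Integrable Y μ)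
    (hY0 : μ[Y|m] =ᵐ[μ] 0) : ∫ ω, X ω * Y ω ∂μ = 0 := by
  have hXY0 : μ[X * Y|m] =ᵐ[μ] 0 := by
    filter_upwards [condExp_mul_of_stronglyMeasurable_left hX hXY hY, hY0] with ω h1 h2
    simp [h1, h2]
  calc ∫ ω, X ω * Y ω ∂μ = ∫ ω, (μ[X * Y|m]) ω ∂μ := (integral_condExp hm).symm
    _ = 0 := by simp [integral_congr_ae hXY0]

lemma condExp_mul_sub_eq_zero [IsFiniteMeasure μ] (hm : m ≤ m0) {X Y P : Ω → ℝ} {K : ℝ}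
    (hX : StronglyMeasurable[m] X) (hXK : ∀ ω, |X ω| ≤ K) (hP : StronglyMeasurable[m] P)
    (hY : Integrable Y μ) (hPi : Integrable P μ) (hYP : μ[Y|m] =ᵐ[μ] P) :
    μ[X * (Y - P)|m] =ᵐ[μ] 0 := by
  have hXm := (hX.mono hm).aestronglyMeasurable (μ := μ)
  have hXY : Integrable (X * Y) μ := hY.bdd_mul hXm (ae_of_all _ hXK)
  have hXP : Integrable (X * P) μ := hPi.bdd_mul hXm (ae_of_all _ hXK)
  filter_upwards [condExp_sub hXY hXP m, condExp_mul_of_stronglyMeasurable_left hX hXY hY, hYP]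
    with ω h1 h2 h3
  rw [mul_sub, h1, Pi.sub_apply, h2, condExp_of_stronglyMeasurable hm (hX.mul hP) hXP]
  simp [h3]

variable {ℱ : Filtration ℕ m0} {Z : ℕ → Ω → ℝ} {C : ℝ}

lemma stronglyMeasurable_sum_range (hZm : ∀ j, StronglyMeasurable[ℱ (j + 1)] (Z j)) (n : ℕ) :
    StronglyMeasurable[ℱ n] (fun ω => ∑ j ∈ range n, Z j ω) :=
  Finset.stronglyMeasurable_fun_sum _ fun j hj => (hZm j).mono (ℱ.mono (mem_range.1 hj))

lemma abs_sum_range_le (hZC : ∀ j ω, |Z j ω| ≤ C) (n : ℕ) (ω : Ω) :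
    |∑ j ∈ range n, Z j ω| ≤ n * C :=
  (abs_sum_le_sum_abs _ _).trans ((sum_le_card_nsmul _ _ C fun j _ => hZC j ω).trans (by simp))

lemma integrable_sq_sum_range [IsFiniteMeasure μ]
    (hZm : ∀ j, StronglyMeasurable[ℱ (j + 1)] (Z j))
    (hZC : ∀ j ω, |Z j ω| ≤ C) (n : ℕ) :
    Integrable (fun ω => (∑ j ∈ range n, Z j ω) ^ 2) μ :=
  .of_bound (((stronglyMeasurable_sum_range hZm n).mono (ℱ.le n)).pow 2).aestronglyMeasurable
    ((n * C) ^ 2) (ae_of_all _ fun ω => by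
      simpa using pow_le_pow_left₀ (abs_nonneg _) (abs_sum_range_le hZC n ω) 2)

lemma integral_sq_sum_range_le [IsProbabilityMeasure μ]
    (hZm : ∀ j, StronglyMeasurable[ℱ (j + 1)] (Z j))
    (hZC : ∀ j ω, |Z j ω| ≤ C) (hZ0 : ∀ j, μ[Z j|ℱ j] =ᵐ[μ] 0) (n : ℕ) :
    ∫ ω, (∑ j ∈ range n, Z j ω) ^ 2 ∂μ ≤ n * C ^ 2 := by
  induction n with
  | zero => simp
  | succ n ih =>
    set S : Ω → ℝ := fun ω => ∑ j ∈ range n, Z j ω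
    have hS := stronglyMeasurable_sum_range hZm n
    have hSC : ∀ ω, |S ω| ≤ n * C := abs_sum_range_le hZC n
    have hZn := (hZm n).mono (ℱ.le (n + 1))
    have hZ : Integrable (Z n) μ := .of_bound hZn.aestronglyMeasurable C (ae_of_all _ (hZC n))
    have hS2 : Integrable (fun ω => S ω ^ 2) μ := integrable_sq_sum_range hZm hZC n
    have hSZ : Integrable (S * Z n) μ := hZ.bdd_mul (hS.mono (ℱ.le n)).aestronglyMeasurable
      (ae_of_all _ hSC)
    have hZ2 : Integrable (fun ω => Z n ω ^ 2) μ :=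
      .of_bound (hZn.pow 2).aestronglyMeasurable (C ^ 2) (ae_of_all _
        fun ω => by simpa using pow_le_pow_left₀ (abs_nonneg _) (hZC n ω) 2)
    have hcross : ∫ ω, S ω * Z n ω ∂μ = 0 :=
      integral_mul_eq_zero_of_condExp_eq_zero (ℱ.le n) hS hSZ hZ (hZ0 n)
    have hZ2C : ∫ ω, Z n ω ^ 2 ∂μ ≤ C ^ 2 := by
      simpa using integral_mono hZ2 (integrable_const (C ^ 2))
        fun ω => (sq_abs (Z n ω)).symm.le.trans (pow_le_pow_left₀ (abs_nonneg _) (hZC n ω) 2)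
    calc ∫ ω, (∑ j ∈ range (n + 1), Z j ω) ^ 2 ∂μ
        = ∫ ω, (S ω ^ 2 + 2 * (S ω * Z n ω) + Z n ω ^ 2) ∂μ := by
          simp only [sum_range_succ, S]; ring_nf
      _ = ∫ ω, S ω ^ 2 ∂μ + 2 * ∫ ω, S ω * Z n ω ∂μ + ∫ ω, Z n ω ^ 2 ∂μ := by
          have h2SZ : Integrable (fun ω => 2 * (S ω * Z n ω)) μ := hSZ.const_mul 2
          rw [integral_add (by exact hS2.add h2SZ) hZ2, integral_add hS2 h2SZ, integral_const_mul]
      _ ≤ n * C ^ 2 + 2 * 0 + C ^ 2 := by rw [hcross]; gcongr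
      _ = (n + 1 : ℕ) * C ^ 2 := by push_cast; ring

lemma ae_tendsto_sum_range_sq_div [IsProbabilityMeasure μ]
    (hZm : ∀ j, StronglyMeasurable[ℱ (j + 1)] (Z j))
    (hZC : ∀ j ω, |Z j ω| ≤ C) (hZ0 : ∀ j, μ[Z j|ℱ j] =ᵐ[μ] 0) :
    ∀ᵐ ω ∂μ, Tendsto (fun k : ℕ => (∑ j ∈ range (k ^ 2), Z j ω) / (k : ℝ) ^ 2) atTop (𝓝 0) := by
  set Y : ℕ → Ω → ℝ := fun k ω => (∑ j ∈ range (k ^ 2), Z j ω) / (k : ℝ) ^ 2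
  have hYi : ∀ k, Integrable (fun ω => Y k ω ^ 2) μ := fun k => by
    simpa only [Y, div_pow] using (integrable_sq_sum_range hZm hZC (k ^ 2)).div_const _
  have hY2 : ∀ k, ∫ ω, Y k ω ^ 2 ∂μ ≤ C ^ 2 * (1 / (k : ℝ) ^ 2) := by
    intro k
    simp only [Y, div_pow, integral_div]
    rcases k.eq_zero_or_pos with rfl | hk
    · simp
    · calc (∫ ω, (∑ j ∈ range (k ^ 2), Z j ω) ^ 2 ∂μ) / ((k : ℝ) ^ 2) ^ 2
          ≤ ((k ^ 2 : ℕ) * C ^ 2) / ((k : ℝ) ^ 2) ^ 2 := by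
            gcongr; exact integral_sq_sum_range_le hZm hZC hZ0 _
        _ = C ^ 2 * (1 / (k : ℝ) ^ 2) := by push_cast; field_simp
  have hsum : Summable fun k => ∫ ω, Y k ω ^ 2 ∂μ :=
    .of_nonneg_of_le (fun k => integral_nonneg fun ω => sq_nonneg _) hY2
      ((Real.summable_one_div_nat_pow.2 one_lt_two).mul_left _)
  filter_upwards [ae_tendsto_zero_of_summable_integral (fun k ω => sq_nonneg (Y k ω)) hYi hsum]
    with ω hω
  rw [tendsto_zero_iff_abs_tendsto_zero]
  simpa [Real.sqrt_sq_eq_abs, Function.comp_def] using hω.sqrt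

theorem ae_tendsto_sum_range_div_zero [IsProbabilityMeasure μ]
    (hZm : ∀ j, StronglyMeasurable[ℱ (j + 1)] (Z j))
    (hZC : ∀ j ω, |Z j ω| ≤ C) (hZ0 : ∀ j, μ[Z j|ℱ j] =ᵐ[μ] 0) :
    ∀ᵐ ω ∂μ, Tendsto (fun n => (∑ j ∈ range n, Z j ω) / n) atTop (𝓝 0) := by
  filter_upwards [ae_tendsto_sum_range_sq_div hZm hZC hZ0] with ω hω
  exact tendsto_sum_range_div_of_tendsto_sq (hZC · ω) hω

end MartingaleDifference

lemma sum_range_switch (d : ℕ → ℝ) (n : ℕ) :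
    ∑ j ∈ range n, (d (j + 1) * (1 - d j) + d j * (1 - d (j + 1)))
      = d n - d 0 + 2 * (∑ j ∈ range n, d j - ∑ j ∈ range n, d j * d (j + 1)) := by
  induction n with
  | zero => simp
  | succ n ih => rw [sum_range_succ, ih, sum_range_succ, sum_range_succ]; ring

lemma sum_Icc_one_eq_sum_range (f : ℕ → ℝ) (n : ℕ) :
    ∑ i ∈ Icc 1 n, f i = ∑ j ∈ range n, f (j + 1) := by
  rw [range_eq_Ico, sum_Ico_add' f 0 n 1]
  rfl

theorem tendsto_switching_rate {d p : ℕ → ℝ} {q K : ℝ} (hd : ∀ n, |d n| ≤ K)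
    (hp : Tendsto p atTop (𝓝 q))
    (havg : Tendsto (fun n => (∑ i ∈ Icc 1 n, d i) / n) atTop (𝓝 q))
    (hmd : Tendsto (fun n => (∑ j ∈ range n, d j * (d (j + 1) - p j)) / n) atTop (𝓝 0)) :
    Tendsto (fun n => (∑ i ∈ Icc 2 n, (d i * (1 - d (i - 1)) + d (i - 1) * (1 - d i)))
      / ((n : ℝ) - 1)) atTop (𝓝 (2 * q * (1 - q))) := by
  have hd2 : ∀ n, |d 0 - d n| ≤ 2 * K := fun n =>
    (abs_sub _ _).trans (by linarith [hd 0, hd n])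
  have hA : Tendsto (fun n => (∑ j ∈ range n, d j) / n) atTop (𝓝 q) := by
    refine tendsto_div_of_eventually_abs_sub_le (C := 2 * K) (.of_forall fun n => ?_) havg
    have h := sum_range_succ' d n
    rw [sum_range_succ, ← sum_Icc_one_eq_sum_range] at h
    rw [show ∑ j ∈ range n, d j - ∑ i ∈ Icc 1 n, d i = d 0 - d n by linarith]
    exact hd2 n
  have hB : Tendsto (fun n => (∑ j ∈ range n, d j * d (j + 1)) / n) atTop (𝓝 (q * q)) := by
    have := hmd.add (tendsto_sum_range_mul_div hd hA hp)
    rw [zero_add] at this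
    refine this.congr fun n => ?_
    rw [← add_div, ← sum_add_distrib]
    exact congrArg (· / _) (sum_congr rfl fun j _ => by ring)
  have hS : Tendsto (fun n => (∑ j ∈ range n, (d (j + 1) * (1 - d j) + d j * (1 - d (j + 1)))) / n)
      atTop (𝓝 (2 * q * (1 - q))) := by
    have := (hA.sub hB).const_mul 2
    rw [show 2 * (q - q * q) = 2 * q * (1 - q) by ring] at this
    refine tendsto_div_of_eventually_abs_sub_le (C := 2 * K)
      (f := fun n => 2 * (∑ j ∈ range n, d j - ∑ j ∈ range n, d j * d (j + 1)))
      (.of_forall fun n => ?_) (this.congr fun n => by ring)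
    rw [sum_range_switch, add_sub_cancel_right, abs_sub_comm]
    exact hd2 n
  refine tendsto_div_sub_one_of_tendsto_div (tendsto_div_of_eventually_abs_sub_le
    (C := |d 1 * (1 - d 0) + d 0 * (1 - d 1)|) ((eventually_ge_atTop 1).mono fun n hn => ?_) hS)
  have hIcc : Icc 2 n = Ioc 1 n := by ext; simp; omega
  have hshift : ∑ i ∈ Icc 1 n, (d i * (1 - d (i - 1)) + d (i - 1) * (1 - d i))
      = ∑ j ∈ range n, (d (j + 1) * (1 - d j) + d j * (1 - d (j + 1))) :=
    sum_Icc_one_eq_sum_range _ n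
  rw [← hshift, ← sum_Ioc_add_eq_sum_Icc hn, ← hIcc, sub_add_cancel_left, abs_neg]

/-- **Asymptotic switching rate.**
Let `d n ∈ {0,1}` be adapted to a filtration `ℱ` with `E[d (n+1) | ℱ n] = p n`,
where `p` is a `[0,1]`-valued martingale converging a.s. to `plim`, and suppose
`(1/n) ∑_{i=1}^n d i → plim` almost surely.  Then the switching rate
`S(n) = (1/(n-1)) ∑_{i=2}^n [d i (1 - d (i-1)) + d (i-1) (1 - d i)]`
converges almost surely to `2 · plim · (1 - plim)`. -/
theorem stmt11
    {Ω : Type*} {m0 : MeasurableSpace Ω} {μ : Measure Ω} [IsProbabilityMeasure μ]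
    (ℱ : Filtration ℕ m0)
    (d : ℕ → Ω → ℝ)
    (hdadapted : Adapted ℱ d)
    (hd01 : ∀ n ω, d n ω = 0 ∨ d n ω = 1)
    (p : ℕ → Ω → ℝ)
    (hp01 : ∀ n ω, p n ω ∈ Set.Icc (0 : ℝ) 1)
    (hpmart : Martingale p ℱ μ)
    (hcond : ∀ n, (fun ω => (μ[d (n + 1)|ℱ n]) ω) =ᵐ[μ] p n)
    (plim : Ω → ℝ)
    (hplim : ∀ᵐ ω ∂μ, Tendsto (fun n => p n ω) atTop (nhds (plim ω)))
    (havg : ∀ᵐ ω ∂μ, Tendsto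
      (fun n => (∑ i ∈ Finset.Icc 1 n, d i ω) / (n : ℝ)) atTop (nhds (plim ω))) :
    ∀ᵐ ω ∂μ, Tendsto
      (fun n => (∑ i ∈ Finset.Icc 2 n,
          (d i ω * (1 - d (i - 1) ω) + d (i - 1) ω * (1 - d i ω))) / ((n : ℝ) - 1))
      atTop (nhds (2 * plim ω * (1 - plim ω))) := by
  have hd1 : ∀ n ω, |d n ω| ≤ 1 := fun n ω => by rcases hd01 n ω with h | h <;> simp [h]
  have hdp : ∀ n ω, |d (n + 1) ω - p n ω| ≤ 1 := fun n ω => by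
    obtain ⟨h0, h1⟩ := hp01 n ω
    rcases hd01 (n + 1) ω with h | h <;> rw [h, abs_le] <;> constructor <;> linarith
  have hdm : ∀ n, StronglyMeasurable[ℱ n] (d n) := fun n => (hdadapted n).stronglyMeasurable
  have hpm : ∀ n, StronglyMeasurable[ℱ n] (p n) := hpmart.stronglyAdapted
  let Z : ℕ → Ω → ℝ := fun j => d j * (d (j + 1) - p j)
  have hZm : ∀ j, StronglyMeasurable[ℱ (j + 1)] (Z j) := fun j =>
    ((hdm j).mono (ℱ.mono j.le_succ)).mul ((hdm (j + 1)).sub ((hpm j).mono (ℱ.mono j.le_succ)))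
  have hZC : ∀ j ω, |Z j ω| ≤ 1 := fun j ω => by
    simpa [Z, abs_mul] using mul_le_one₀ (hd1 j ω) (abs_nonneg _) (hdp j ω)
  have hZ0 : ∀ j, μ[Z j|ℱ j] =ᵐ[μ] 0 := fun j =>
    condExp_mul_sub_eq_zero (ℱ.le j) (hdm j) (hd1 j) (hpm j)
      (.of_bound ((hdm (j + 1)).mono (ℱ.le _)).aestronglyMeasurable 1 (ae_of_all _ (hd1 (j + 1))))
      (hpmart.integrable j) (hcond j)
  filter_upwards [ae_tendsto_sum_range_div_zero hZm hZC hZ0, hplim, havg] with ω hZ hp hd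
  exact tendsto_switching_rate (hd1 · ω) hp hd hZ
end
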